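/- arXiv:1609.02484 — 5 statements merged into one kernel-verified Lean document; each statement's English description precedes it below -/
import Mathlib

section
/- Let σ be an m-sign and let f be a binary forest with m roots and n leaves. Then the sign list f(σ) produced by the action of f on σ is an n-sign: it has length n, its first entry is +, and, when n ≥ 2, its second entry is −. (This is part of Proposition 3.2: a forest f together with an m-sign σ determines an n-sign f(σ).) -/
/-- A planar rooted binary tree: a leaf, or a node with two subtrees. -/
inductive PTree : Type
  | leaf : PTree
  | node : PTree → PTree → PTree

/-- The number of leaves of a planar binary tree. -/
def PTree.leaves : PTree → ℕ
  | .leaf => 1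
  | .node l r => l.leaves + r.leaves

/-- The sign list produced by a single tree acting on a single sign `s`:
a leaf just outputs `s`; a node (an elementary caret at the root) turns `s`
into the pair `(s, ¬s)` and then lets the left subtree act on `s` and the
right subtree act on `¬s`.  This realises the action "one elementary caret per
internal vertex, working from the roots upwards". -/
def PTree.act : PTree → Bool → List Bool
  | .leaf, s => [s]
  | .node l r, s => l.act s ++ r.act (!s)

/-- The action of a binary forest (a list of trees, one per root) on a sign
list of the same length: the `i`-th tree acts on the `i`-th sign, by recursion
on the forest. -/
def forestAct : List PTree → List Bool → List Bool
  | t :: f, s :: σ => t.act s ++ forestAct f σ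
  | _, _ => []

/-!
A tree acting on a sign `s` outputs `s` first and, unless it is a single leaf, `¬s` second:
the leftmost leaf descends from the root through left children only, and the leaf after it
is the leftmost leaf of the right subtree of the lowest caret on that path. Hence a forest
acting on a sign list starting with `+` outputs `+` first, and its second output is either
`¬+ = −` (first tree not a leaf) or the second entry of the sign list (first tree a leaf).
-/

namespace PTree

theorem one_le_leaves : ∀ t : PTree, 1 ≤ t.leaves
  | leaf => le_rfl
  | node l _ => l.one_le_leaves.trans (Nat.le_add_right _ _)

theorem two_le_leaves_node (l r : PTree) : 2 ≤ (node l r).leaves :=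
  Nat.add_le_add l.one_le_leaves r.one_le_leaves

theorem length_act (t : PTree) (s : Bool) : (t.act s).length = t.leaves := by
  induction t generalizing s <;> simp [act, leaves, *]

theorem getElem?_zero_act (t : PTree) (s : Bool) : (t.act s)[0]? = some s := by
  induction t generalizing s with
  | leaf => rfl
  | node l r ihl _ =>
    rw [act, List.getElem?_append_left (by rw [length_act]; exact l.one_le_leaves), ihl]

theorem getElem?_one_act_node (l r : PTree) (s : Bool) : ((node l r).act s)[1]? = some !s := by
  induction l generalizing r s with
  | leaf => simp [act, r.getElem?_zero_act]
  | node ll lr ihl _ =>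
    rw [act, List.getElem?_append_left (by rw [length_act]; exact two_le_leaves_node ll lr), ihl]

end PTree

theorem length_forestAct {f : List PTree} {σ : List Bool} (h : f.length = σ.length) :
    (forestAct f σ).length = (f.map PTree.leaves).sum := by
  induction f generalizing σ with
  | nil => cases σ <;> rfl
  | cons t f ih =>
    cases σ with
    | nil => simp at h
    | cons s σ => simp [forestAct, PTree.length_act, ih (Nat.succ_injective h)]

theorem getElem?_zero_forestAct {f : List PTree} {σ : List Bool} (h : f.length = σ.length) :
    (forestAct f σ)[0]? = σ[0]? := by
  match f, σ with
  | [], [] => rfl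
  | t :: f, s :: σ =>
    rw [forestAct, List.getElem?_append_left (by rw [PTree.length_act]; exact t.one_le_leaves)]
    exact t.getElem?_zero_act s

theorem forestAct_nil_right (f : List PTree) : forestAct f [] = [] := by
  cases f <;> rfl

/-- The sign conditions of an `n`-sign, the length `n` aside. -/
def IsSign (σ : List Bool) : Prop :=
  σ[0]? = some true ∧ (2 ≤ σ.length → σ[1]? = some false)

theorem isSign_forestAct {f : List PTree} {σ : List Bool} (hσ : IsSign σ)
    (h : f.length = σ.length) : IsSign (forestAct f σ) := by
  refine ⟨by rw [getElem?_zero_forestAct h, hσ.1], fun h2 => ?_⟩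
  match f, σ with
  | [], σ => cases σ <;> simp [forestAct] at h2
  | _ :: _, [] => simp at h
  | t :: f, s :: σ =>
    obtain rfl : s = true := by simpa using hσ.1
    cases t with
    | leaf =>
      have hσne : σ ≠ [] := by
        rintro rfl
        simp [forestAct, PTree.act, forestAct_nil_right] at h2
      change (true :: forestAct f σ)[1]? = some false
      rw [List.getElem?_cons_succ, getElem?_zero_forestAct (Nat.succ_injective h)]
      simpa using hσ.2 (by simpa [Nat.one_le_iff_ne_zero] using hσne)
    | node l r =>
      rw [forestAct,
        List.getElem?_append_left (by rw [PTree.length_act]; exact PTree.two_le_leaves_node l r)]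
      exact l.getElem?_one_act_node r true

theorem forestAct_isSign_general (m n : ℕ) (f : List PTree) (σ : List Bool)
    (hf : f.length = m) (hn : (f.map PTree.leaves).sum = n)
    (hσ : σ.length = m) (hσ1 : σ[0]? = some true)
    (hσ2 : 2 ≤ m → σ[1]? = some false) :
    (forestAct f σ).length = n ∧ (forestAct f σ)[0]? = some true ∧
      (2 ≤ n → (forestAct f σ)[1]? = some false) := by
  have hlen : f.length = σ.length := hf.trans hσ.symm
  have hlen' : (forestAct f σ).length = n := (length_forestAct hlen).trans hn
  have hsign : IsSign (forestAct f σ) := isSign_forestAct ⟨hσ1, hσ ▸ hσ2⟩ hlen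
  exact ⟨hlen', hsign.1, hlen' ▸ hsign.2⟩

/-- If `σ` is an `m`-sign (length `m`, first entry `+`, second entry `−` when
`m ≥ 2`) and `f` is a binary forest with `m` roots and `n` leaves, then `f(σ)`
is an `n`-sign: it has length `n`, its first entry is `+` and, when `n ≥ 2`,
its second entry is `−`. -/
theorem forestAct_isSign (m n : ℕ) (hm : 1 ≤ m) (f : List PTree) (σ : List Bool)
    (hf : f.length = m) (hn : (f.map PTree.leaves).sum = n)
    (hσ : σ.length = m) (hσ1 : σ[0]? = some true)
    (hσ2 : 2 ≤ m → σ[1]? = some false) :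
    (forestAct f σ).length = n ∧ (forestAct f σ)[0]? = some true ∧
      (2 ≤ n → (forestAct f σ)[1]? = some false) :=
  forestAct_isSign_general m n f σ hf hn hσ hσ1 hσ2
end

section
/- (Unit property of the oriented forest category, part of Proposition 3.6.) For every n-sign σ there exists a planar rooted binary tree T with n leaves such that T(σ₀) = σ, where σ₀ = (+) is the unique 1-sign and T(σ₀) denotes the action of the forest consisting of the single tree T on σ₀. -/
/-!
Every sign list `s :: t` whose second entry (if any) is `!s` is `T.act s` for some tree `T`,
by induction on `t`. Write `t = !s :: r`. If `r` does not start with `!s`, graft a tree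
realising `!s :: r` as the right subtree of a caret whose left subtree is a leaf. Otherwise
`s :: r` is realised by induction, and the second entry of any realised list can be repeated:
descending the left spine to the first caret, replace its left leaf by a caret.
-/

namespace PTree

lemma length_act_s3 (T : PTree) (s : Bool) : (T.act s).length = T.leaves := by
  induction T generalizing s with
  | leaf => rfl
  | node l r ihl ihr => simp [act, leaves, ihl, ihr]

lemma exists_act_eq_cons (T : PTree) (s : Bool) : ∃ t, T.act s = s :: t := by
  induction T generalizing s with
  | leaf => exact ⟨[], rfl⟩
  | node l r ihl _ =>
    obtain ⟨t, ht⟩ := ihl s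
    exact ⟨t ++ r.act (!s), by simp [act, ht]⟩

lemma exists_act_eq_cons_not_cons_not {T : PTree} {s : Bool} {r : List Bool}
    (h : T.act s = s :: (!s) :: r) : ∃ T' : PTree, T'.act s = s :: (!s) :: (!s) :: r := by
  induction T generalizing r with
  | leaf => simp [act] at h
  | node A B ihA _ =>
    obtain ⟨a, ha⟩ := A.exists_act_eq_cons s
    rw [act, ha] at h
    rcases a with _ | ⟨y, a⟩
    · refine ⟨node (node leaf leaf) B, ?_⟩
      simp only [List.nil_append, List.cons_append, List.cons.injEq, true_and] at h
      simp [act, h]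
    · simp only [List.cons_append, List.cons.injEq, true_and] at h
      obtain ⟨rfl, hr⟩ := h
      obtain ⟨A', hA'⟩ := ihA ha
      exact ⟨node A' B, by simp [act, hA', hr]⟩

theorem exists_act_eq_of_head?_ne {s : Bool} {t : List Bool} (ht : t.head? ≠ some s) :
    ∃ T : PTree, T.act s = s :: t := by
  induction t generalizing s with
  | nil => exact ⟨leaf, rfl⟩
  | cons x r ih =>
    obtain rfl : x = !s := by cases x <;> cases s <;> simp_all
    by_cases hr : r.head? = some (!s)
    · obtain ⟨r, rfl⟩ : ∃ r', r = (!s) :: r' := by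
        cases r <;> simp_all
      obtain ⟨A, hA⟩ := ih (s := s) (by simp)
      exact exists_act_eq_cons_not_cons_not hA
    · obtain ⟨B, hB⟩ := ih hr
      exact ⟨node leaf B, by simp [act, hB]⟩

end PTree

theorem exists_tree_of_sign_general (n : ℕ) (σ : List Bool)
    (hσ : σ.length = n) (hσ1 : σ[0]? = some true)
    (hσ2 : 2 ≤ n → σ[1]? = some false) :
    ∃ T : PTree, T.leaves = n ∧ forestAct [T] [true] = σ := by
  obtain ⟨t, rfl⟩ : ∃ t, σ = true :: t := by
    rcases σ with _ | ⟨b, t⟩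
    · simp at hσ1
    · exact ⟨t, by simpa using hσ1⟩
  have ht : t.head? ≠ some true := by
    rcases t with _ | ⟨y, t⟩
    · simp
    · simpa using hσ2 (by simp [← hσ])
  obtain ⟨T, hT⟩ := PTree.exists_act_eq_of_head?_ne ht
  refine ⟨T, ?_, ?_⟩
  · rw [← PTree.length_act_s3 T true, hT, hσ]
  · simp [forestAct, hT]

/-- Unit property: every `n`-sign `σ` (a sign list of length `n ≥ 1` whose
first entry is `+` and whose second entry, when `n ≥ 2`, is `−`) is of the
form `T(σ₀)` for some binary tree `T` with `n` leaves, where `σ₀ = (+)` is the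
unique `1`-sign. -/
theorem exists_tree_of_sign (n : ℕ) (hn : 1 ≤ n) (σ : List Bool)
    (hσ : σ.length = n) (hσ1 : σ[0]? = some true)
    (hσ2 : 2 ≤ n → σ[1]? = some false) :
    ∃ T : PTree, T.leaves = n ∧ forestAct [T] [true] = σ :=
  exists_tree_of_sign_general n σ hσ hσ1 hσ2
end

section
/- (Stabilisation property of the forest category, part of Proposition 3.6.) For any two planar rooted binary trees S and T there exist binary forests p and q, with p having as many roots as S has leaves and q having as many roots as T has leaves, such that the composite trees p∘S and q∘T are equal. In other words, any two binary trees admit a common refinement obtained by grafting forests onto their leaves. -/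
/-- Graft the trees of a forest `f` onto the leaves of a tree `t`, from left to
right; returns the grafted tree together with the unused remainder of `f`. -/
def PTree.graft : PTree → List PTree → PTree × List PTree
  | .leaf, t :: f => (t, f)
  | .leaf, [] => (.leaf, [])
  | .node l r, f =>
      let (l', f') := l.graft f
      let (r', f'') := r.graft f'
      (.node l' r', f'')

/-- The composite forest `f ∘ g` obtained by stacking the forest `f` on top of
the forest `g`, i.e. grafting the `i`-th tree of `f` onto the `i`-th leaf
of `g`. -/
def forestComp (f g : List PTree) : List PTree :=
  match g with
  | [] => []
  | t :: g' =>
      let (t', f') := t.graft f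
      t' :: forestComp f' g'

/-! Every tree `t` of depth at most `n` refines to the complete binary tree of depth `n`:
graft onto each leaf of `t` at height `k` the complete tree of depth `n - k`. Two trees
`S` and `T` therefore have the common refinement `full (max S.depth T.depth)`. -/

namespace PTree

def depth : PTree → ℕ
  | .leaf => 0
  | .node l r => max l.depth r.depth + 1

def full : ℕ → PTree
  | 0 => .leaf
  | n + 1 => .node (full n) (full n)

/-- Meaningful only when `t.depth ≤ n`; the `node`, `0` case is a junk value. -/
def refine : PTree → ℕ → List PTree
  | .leaf, n => [full n]
  | .node _ _, 0 => []
  | .node l r, n + 1 => l.refine n ++ r.refine n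

theorem depth_node_le_succ {l r : PTree} {n : ℕ} :
    (node l r).depth ≤ n + 1 ↔ l.depth ≤ n ∧ r.depth ≤ n := by
  simp only [depth, Nat.add_le_add_iff_right, max_le_iff]

theorem length_refine {t : PTree} {n : ℕ} (h : t.depth ≤ n) :
    (t.refine n).length = t.leaves := by
  induction t generalizing n with
  | leaf => rfl
  | node l r ihl ihr =>
    cases n with
    | zero => simp [depth] at h
    | succ n =>
      obtain ⟨hl, hr⟩ := depth_node_le_succ.mp h
      simp [refine, leaves, ihl hl, ihr hr]

theorem graft_refine_append {t : PTree} {n : ℕ} (h : t.depth ≤ n) (rest : List PTree) :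
    t.graft (t.refine n ++ rest) = (full n, rest) := by
  induction t generalizing n rest with
  | leaf => rfl
  | node l r ihl ihr =>
    cases n with
    | zero => simp [depth] at h
    | succ n =>
      obtain ⟨hl, hr⟩ := depth_node_le_succ.mp h
      simp [refine, graft, List.append_assoc, ihl hl, ihr hr, full]

theorem forestComp_refine {t : PTree} {n : ℕ} (h : t.depth ≤ n) :
    forestComp (t.refine n) [t] = [full n] := by
  have hgraft := graft_refine_append h []
  rw [List.append_nil] at hgraft
  simp [forestComp, hgraft]

end PTree

/-- Stabilisation: any two binary trees `S` and `T` admit a common refinement,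
i.e. there are forests `p` (with as many roots as `S` has leaves) and `q`
(with as many roots as `T` has leaves) such that `p ∘ S = q ∘ T`. -/
theorem trees_common_refinement (S T : PTree) :
    ∃ (p q : List PTree), p.length = S.leaves ∧ q.length = T.leaves ∧
      forestComp p [S] = forestComp q [T] := by
  have hS : S.depth ≤ max S.depth T.depth := le_max_left _ _
  have hT : T.depth ≤ max S.depth T.depth := le_max_right _ _
  exact ⟨S.refine _, T.refine _, PTree.length_refine hS, PTree.length_refine hT,
    (PTree.forestComp_refine hS).trans (PTree.forestComp_refine hT).symm⟩
end

section
/- (Cancellation property of the forest category, part of Proposition 3.6.) Let f be a planar rooted binary tree with n leaves, and let p and q be binary forests each having n roots. If the composite trees p∘f and q∘f are equal, then p = q. -/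
namespace PTree

/-- The forest that must be grafted onto the leaves of `t` to obtain `s`. -/
def ungraft : PTree → PTree → List PTree
  | .leaf, s => [s]
  | .node l r, .node a b => l.ungraft a ++ r.ungraft b
  | .node _ _, .leaf => []

theorem graft_snd : ∀ (t : PTree) (p : List PTree), (t.graft p).2 = p.drop t.leaves
  | .leaf, [] => rfl
  | .leaf, _ :: _ => rfl
  | .node l r, p => by
      simp only [graft, leaves, graft_snd l, graft_snd r, List.drop_drop]

theorem ungraft_graft : ∀ (t : PTree) (p : List PTree), t.leaves ≤ p.length →
    t.ungraft (t.graft p).1 = p.take t.leaves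
  | .leaf, [], h => by simp [leaves] at h
  | .leaf, _ :: _, _ => rfl
  | .node l r, p, h => by
      simp only [leaves] at h
      have hl : l.leaves ≤ p.length := by omega
      have hr : r.leaves ≤ (p.drop l.leaves).length := by
        rw [List.length_drop]; omega
      simp only [graft, ungraft, leaves, graft_snd l, ungraft_graft l p hl,
        ungraft_graft r _ hr, List.take_add]

theorem ungraft_graft_of_length_eq (t : PTree) (p : List PTree) (hp : p.length = t.leaves) :
    t.ungraft (t.graft p).1 = p := by
  rw [ungraft_graft t p hp.ge, ← hp, List.take_length]

end PTree

/-- Cancellation: if `f` is a tree with `n` leaves and `p`, `q` are forests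
with `n` roots such that `p ∘ f = q ∘ f`, then `p = q`. -/
theorem forest_cancellation (n : ℕ) (f : PTree) (hf : f.leaves = n)
    (p q : List PTree) (hp : p.length = n) (hq : q.length = n)
    (h : forestComp p [f] = forestComp q [f]) : p = q := by
  have hgraft : (f.graft p).1 = (f.graft q).1 := List.head_eq_of_cons_eq h
  rw [← f.ungraft_graft_of_length_eq p (by omega), hgraft,
    f.ungraft_graft_of_length_eq q (by omega)]
end

section
/- (Stabilisation in the oriented forest category, part of Proposition 3.6.) For any two planar rooted binary trees S and T there exist binary forests p and q, with p having as many roots as S has leaves and q having as many roots as T has leaves, such that p∘S = q∘T as trees and, moreover, the induced signs agree: p(S(σ₀)) = q(T(σ₀)), where σ₀ = (+) is the unique 1-sign. -/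
theorem List.exists_append_of_length_eq_add {α : Type*} {l : List α} {m n : ℕ}
    (h : l.length = m + n) : ∃ l₁ l₂, l = l₁ ++ l₂ ∧ l₁.length = m ∧ l₂.length = n :=
  ⟨l.take m, l.drop m, (List.take_append_drop m l).symm, by simp; omega, by simp; omega⟩

theorem forestAct_append {f : List PTree} {σ : List Bool} (h : f.length = σ.length)
    (g : List PTree) (τ : List Bool) :
    forestAct (f ++ g) (σ ++ τ) = forestAct f σ ++ forestAct g τ := by
  induction f generalizing σ with
  | nil => simp [List.length_eq_zero_iff.mp h.symm, forestAct]
  | cons t f ih =>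
    obtain ⟨s, σ, rfl⟩ := List.exists_cons_of_length_eq_add_one h.symm
    simp [forestAct, ih (by simpa using h)]

namespace PTree

theorem graft_append {t : PTree} {f : List PTree} (hf : f.length = t.leaves)
    (rest : List PTree) : t.graft (f ++ rest) = ((t.graft f).1, rest) := by
  induction t generalizing f rest with
  | leaf =>
    obtain ⟨u, rfl⟩ := List.length_eq_one_iff.mp hf
    rfl
  | node l r ihl ihr =>
    obtain ⟨f₁, f₂, rfl, h₁, h₂⟩ := List.exists_append_of_length_eq_add hf
    simp [graft, List.append_assoc, ihl h₁, ihr h₂]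

theorem graft_node_append {l : PTree} {f : List PTree} (hf : f.length = l.leaves)
    (r : PTree) (g : List PTree) :
    ((node l r).graft (f ++ g)).1 = node (l.graft f).1 (r.graft g).1 := by
  simp [graft, graft_append hf]

theorem act_graft {t : PTree} {f : List PTree} (hf : f.length = t.leaves) (s : Bool) :
    (t.graft f).1.act s = forestAct f (t.act s) := by
  induction t generalizing f s with
  | leaf =>
    obtain ⟨u, rfl⟩ := List.length_eq_one_iff.mp hf
    simp [graft, act, forestAct]
  | node l r ihl ihr =>
    obtain ⟨f₁, f₂, rfl, h₁, h₂⟩ := List.exists_append_of_length_eq_add hf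
    rw [graft_node_append h₁, act, act, ihl h₁, ihr h₂,
      forestAct_append (by rw [h₁, length_act])]

/-- The union of two trees, viewed as sets of vertices. -/
def join : PTree → PTree → PTree
  | leaf, t => t
  | node a b, leaf => node a b
  | node a b, node c d => node (a.join c) (b.join d)

theorem join_comm : ∀ s t : PTree, s.join t = t.join s
  | leaf, leaf | leaf, node _ _ | node _ _, leaf => rfl
  | node a b, node c d => by rw [join, join, join_comm a c, join_comm b d]

theorem join_leaf (s : PTree) : s.join leaf = s := by
  cases s <;> rfl

def joinForest : PTree → PTree → List PTree
  | leaf, t => [t]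
  | node a b, leaf => a.joinForest leaf ++ b.joinForest leaf
  | node a b, node c d => a.joinForest c ++ b.joinForest d

theorem length_joinForest : ∀ s t : PTree, (s.joinForest t).length = s.leaves
  | leaf, _ => rfl
  | node a b, leaf => by simp [joinForest, leaves, length_joinForest a, length_joinForest b]
  | node a b, node c d => by simp [joinForest, leaves, length_joinForest a, length_joinForest b]

theorem graft_joinForest : ∀ s t : PTree, (s.graft (s.joinForest t)).1 = s.join t
  | leaf, _ => rfl
  | node a b, leaf => by
    rw [joinForest, graft_node_append (length_joinForest a _),
      graft_joinForest a, graft_joinForest b, join_leaf, join_leaf, join]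
  | node a b, node c d => by
    rw [joinForest, graft_node_append (length_joinForest a _),
      graft_joinForest a, graft_joinForest b, join]

end PTree

theorem forestComp_singleton (f : List PTree) (t : PTree) :
    forestComp f [t] = [(t.graft f).1] := by
  simp [forestComp]

theorem forestAct_singleton (t : PTree) (s : Bool) : forestAct [t] [s] = t.act s := by
  simp [forestAct]

/-- Stabilisation in the oriented forest category: any two binary trees `S`
and `T` admit a common refinement `p ∘ S = q ∘ T` whose induced signs agree:
`p(S(σ₀)) = q(T(σ₀))`, where `σ₀ = (+)` is the unique `1`-sign. -/
theorem oriented_common_refinement (S T : PTree) :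
    ∃ (p q : List PTree), p.length = S.leaves ∧ q.length = T.leaves ∧
      forestComp p [S] = forestComp q [T] ∧
      forestAct p (forestAct [S] [true]) = forestAct q (forestAct [T] [true]) := by
  have hp := S.length_joinForest T
  have hq := T.length_joinForest S
  have h_trees : (S.graft (S.joinForest T)).1 = (T.graft (T.joinForest S)).1 := by
    rw [PTree.graft_joinForest, PTree.graft_joinForest, PTree.join_comm]
  refine ⟨S.joinForest T, T.joinForest S, hp, hq, ?_, ?_⟩
  · rw [forestComp_singleton, forestComp_singleton, h_trees]
  · rw [forestAct_singleton, forestAct_singleton, ← PTree.act_graft hp, ← PTree.act_graft hq,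
      h_trees]
end
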